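/- Given an n×n real symmetric matrix A with nonnegative entries and strictly positive degrees d_i = Σ_j A_{ij}, let D = diag(d_1,…,d_n) and define the normalized graph Laplacian L_norm = I − D^{−1/2} A D^{−1/2}. Suppose additionally that the weighted graph defined by A is connected, i.e., for every pair of indices i, j there exists a natural number k with (A^k)_{ij} > 0. Then the kernel of L_norm is one-dimensional: every x ∈ ℝ^n with L_norm x = 0 is a scalar multiple of the vector v with v_i = √d_i. In particular, 0 is a simple eigenvalue of L_norm. -/

import Mathlib

/-!
Substituting `x = D^{1/2} y` turns `L_norm x = 0` into `d_i y_i = ∑_j A_ij y_j`: every value of `y`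
is a weighted average of its values at the neighbours. At an index where `y` is maximal this
forces `y` to take the same value at every neighbour, so the set of maximisers is closed under
the edges of the graph; by connectivity it is everything, and `y` is constant.
-/

open Matrix

namespace Matrix

variable {ι R : Type*} [Fintype ι]

def IsHarmonic [Semiring R] (A : Matrix ι ι R) (y : ι → R) : Prop :=
  ∀ i, (∑ j, A i j) * y i = (A *ᵥ y) i

variable [Ring R] [LinearOrder R] [IsStrictOrderedRing R] {A : Matrix ι ι R} {y : ι → R}

theorem IsHarmonic.apply_eq_of_isMax (hy : A.IsHarmonic y) (hA : ∀ i j, 0 ≤ A i j) {i : ι}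
    (hmax : ∀ j, y j ≤ y i) {j : ι} (hij : 0 < A i j) : y j = y i := by
  have hsum : ∑ k, A i k * (y i - y k) = 0 := by
    simp only [mul_sub, Finset.sum_sub_distrib, ← Finset.sum_mul, hy i, mulVec, dotProduct,
      sub_self]
  have hterm := (Finset.sum_eq_zero_iff_of_nonneg fun k _ =>
    mul_nonneg (hA i k) (sub_nonneg.mpr (hmax k))).mp hsum j (Finset.mem_univ j)
  exact (sub_eq_zero.mp ((mul_eq_zero.mp hterm).resolve_left hij.ne')).symm

theorem mem_of_pow_apply_pos [DecidableEq ι] (hA : ∀ i j, 0 ≤ A i j) {S : Set ι}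
    (hS : ∀ i j, i ∈ S → 0 < A i j → j ∈ S) {k : ℕ} {i j : ι} (hi : i ∈ S)
    (hk : 0 < (A ^ k) i j) : j ∈ S := by
  let := toQuiver A
  obtain ⟨⟨p, -⟩⟩ := (pow_apply_pos_iff_nonempty_path hA k i j).mp hk
  clear hk
  induction p with
  | nil => exact hi
  | cons _ e ih => exact hS _ _ ih e.down

theorem IsHarmonic.exists_eq_const [DecidableEq ι] (hy : A.IsHarmonic y)
    (hA : ∀ i j, 0 ≤ A i j) (hconn : ∀ i j, ∃ k : ℕ, 0 < (A ^ k) i j) :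
    ∃ c, ∀ i, y i = c := by
  cases isEmpty_or_nonempty ι
  · exact ⟨0, isEmptyElim⟩
  obtain ⟨i₀, hi₀⟩ := Finite.exists_max y
  have hclosed : ∀ i j, i ∈ {i | y i = y i₀} → 0 < A i j → j ∈ {i | y i = y i₀} :=
    fun i j (hi : y i = y i₀) hij => (hy.apply_eq_of_isMax hA (hi ▸ hi₀) hij).trans hi
  refine ⟨y i₀, fun i => ?_⟩
  obtain ⟨k, hk⟩ := hconn i₀ i
  exact mem_of_pow_apply_pos hA hclosed rfl hk

end Matrix

theorem isHarmonic_of_normalized_mulVec_eq_zero {ι K : Type*} [Fintype ι] [DecidableEq ι]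
    [Field K] {A : Matrix ι ι K} {s y : ι → K} (hs : ∀ i, s i ≠ 0)
    (hd : ∀ i, s i * s i = ∑ j, A i j)
    (h : (1 - of fun i j => A i j / (s i * s j)) *ᵥ (fun i => s i * y i) = 0) :
    A.IsHarmonic y := by
  intro i
  have hi := congrFun h i
  rw [sub_mulVec, one_mulVec, Pi.sub_apply, Pi.zero_apply, sub_eq_zero] at hi
  simp only [mulVec, dotProduct, of_apply] at hi
  have hterm : ∀ j, A i j / (s i * s j) * (s j * y j) = A i j * y j / s i := fun j => by
    field_simp [hs i, hs j]
  rw [Finset.sum_congr rfl fun j _ => hterm j, ← Finset.sum_div, eq_div_iff (hs i)] at hi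
  rw [← hd i, mulVec, dotProduct, ← hi]
  ring

theorem normalized_laplacian_kernel_of_connected_general
    (n : ℕ) (A : Matrix (Fin n) (Fin n) ℝ)
    (hnonneg : ∀ i j, 0 ≤ A i j) (hdeg : ∀ i, 0 < ∑ j, A i j)
    (hconn : ∀ i j, ∃ k : ℕ, 0 < (A ^ k) i j) :
    let d : Fin n → ℝ := fun i => ∑ j, A i j
    let L : Matrix (Fin n) (Fin n) ℝ :=
      1 - Matrix.of fun i j => A i j / (Real.sqrt (d i) * Real.sqrt (d j))
    ∀ x : Fin n → ℝ, L.mulVec x = 0 →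
      ∃ c : ℝ, x = c • fun i => Real.sqrt (d i) := by
  intro d L x hx
  have hs : ∀ i, Real.sqrt (d i) ≠ 0 := fun i => (Real.sqrt_pos.mpr (hdeg i)).ne'
  set y : Fin n → ℝ := fun i => x i / Real.sqrt (d i)
  have hxy : x = fun i => Real.sqrt (d i) * y i := funext fun i => (mul_div_cancel₀ (x i) (hs i)).symm
  have hharm : A.IsHarmonic y := isHarmonic_of_normalized_mulVec_eq_zero hs
    (fun i => Real.mul_self_sqrt (hdeg i).le) (hxy ▸ hx)
  obtain ⟨c, hc⟩ := hharm.exists_eq_const hnonneg hconn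
  refine ⟨c, hxy.trans (funext fun i => ?_)⟩
  simp [hc i, mul_comm]

/-- If the weighted graph given by the symmetric nonnegative matrix `A` (with positive degrees)
is connected, i.e. for all `i j` there is `k` with `(A^k)_{ij} > 0`, then the kernel of the
normalized Laplacian `L = I - D^{-1/2} A D^{-1/2}` is one-dimensional: every `x` with `L x = 0`
is a scalar multiple of the vector `v_i = √d_i`. -/
theorem normalized_laplacian_kernel_of_connected
    (n : ℕ) (A : Matrix (Fin n) (Fin n) ℝ) (hA : A.IsSymm)
    (hnonneg : ∀ i j, 0 ≤ A i j) (hdeg : ∀ i, 0 < ∑ j, A i j)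
    (hconn : ∀ i j, ∃ k : ℕ, 0 < (A ^ k) i j) :
    let d : Fin n → ℝ := fun i => ∑ j, A i j
    let L : Matrix (Fin n) (Fin n) ℝ :=
      1 - Matrix.of fun i j => A i j / (Real.sqrt (d i) * Real.sqrt (d j))
    ∀ x : Fin n → ℝ, L.mulVec x = 0 →
      ∃ c : ℝ, x = c • fun i => Real.sqrt (d i) :=
  normalized_laplacian_kernel_of_connected_general n A hnonneg hdeg hconn
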